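/- arXiv:1804.04959 — 4 statements merged into one kernel-verified Lean document; each statement's English description precedes it below -/
import Mathlib

section
/- Let z₁, z₂, z₃ be pairwise distinct complex numbers. The set {z₁, z₂, z₃} admits a nontrivial symmetry — i.e., there exist a ∈ ℂ \ {0} and b ∈ ℂ such that the affine map z ↦ az + b maps the set {z₁, z₂, z₃} onto itself and induces a nontrivial permutation of it — if and only if j(z₁, z₂, z₃) ∈ {0, 1}. -/
/-!
With `Q = z₁² + z₂² + z₃² - z₁z₂ - z₂z₃ - z₃z₁` and `Δ = (z₁ - z₂)(z₂ - z₃)(z₃ - z₁)` one has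
`j = 4Q³ / 27Δ²`, and the discriminant identity
`4Q³ - 27Δ² = ((z₂ + z₃ - 2z₁)(z₁ + z₃ - 2z₂)(z₁ + z₂ - 2z₃))²`.
So `j = 0` says that the triangle is equilateral (`Q = 0`) and `j = 1` that one point is the
midpoint of the other two. An injective map permuting three points nontrivially acts either as a
3-cycle or as a transposition. An affine 3-cycle `z ↦ az + b` forces `Q = 0`; an affine
transposition has `a = -1`, so it is the point reflection in its fixed point, which is then the
midpoint of the swapped pair. Conversely each configuration carries the corresponding symmetry.
-/

/-- The j-invariant of a triple of complex numbers (the j-invariant of the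
quadruple `(z₁, z₂, z₃, ∞)`). -/
noncomputable def jInv3 (z₁ z₂ z₃ : ℂ) : ℂ :=
  let l := (z₁ - z₃) / (z₂ - z₃)
  4 * (l ^ 2 - l + 1) ^ 3 / (27 * l ^ 2 * (l - 1) ^ 2)

open Function Set

section ThreePoints

variable {α : Type*} {f : α → α} {x y z : α}

theorem image_triple_eq_self_iff (hf : Injective f) (hxy : x ≠ y) (hxz : x ≠ z) (hyz : y ≠ z) :
    f '' {x, y, z} = {x, y, z} ↔
      (f x = x ∧ f y = y ∧ f z = z) ∨ (f x = x ∧ f y = z ∧ f z = y) ∨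
      (f x = z ∧ f y = y ∧ f z = x) ∨ (f x = y ∧ f y = x ∧ f z = z) ∨
      (f x = y ∧ f y = z ∧ f z = x) ∨ (f x = z ∧ f y = x ∧ f z = y) := by
  constructor
  · intro h
    have hmaps : MapsTo f {x, y, z} {x, y, z} := fun w hw => h.subset (mem_image_of_mem f hw)
    have hx := hmaps (mem_insert x _)
    have hy := hmaps (mem_insert_of_mem x (mem_insert y _))
    have hz := hmaps (mem_insert_of_mem x (mem_insert_of_mem y rfl))
    simp only [mem_insert_iff, mem_singleton_iff] at hx hy hz
    grind [hf.eq_iff]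
  · rintro (⟨hx, hy, hz⟩ | ⟨hx, hy, hz⟩ | ⟨hx, hy, hz⟩ | ⟨hx, hy, hz⟩ | ⟨hx, hy, hz⟩ | ⟨hx, hy, hz⟩) <;>
      simp only [image_insert_eq, image_singleton, hx, hy, hz] <;> grind

end ThreePoints

section AffineSymmetry

theorem sq_add_sq_add_sq_eq_of_affine_cycle {R : Type*} [CommRing R] {a b x y z : R}
    (hx : a * x + b = y) (hy : a * y + b = z) (hz : a * z + b = x) :
    x ^ 2 + y ^ 2 + z ^ 2 = x * y + y * z + z * x := by
  linear_combination (x - y) * (hy - hz) - (y - z) * (hx - hy)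

variable {K : Type*} [Field K] {a b x y z : K}

theorem affine_injective (ha : a ≠ 0) : Injective fun x => a * x + b :=
  (add_left_injective b).comp (mul_right_injective₀ ha)

theorem add_eq_two_mul_of_affine_swap (hx : a * x + b = y) (hy : a * y + b = x)
    (hz : a * z + b = z) (hxy : x ≠ y) : x + y = 2 * z := by
  have ha : a = -1 := by
    have : (a + 1) * (x - y) = 0 := by linear_combination hx - hy
    simpa [sub_ne_zero.2 hxy, add_eq_zero_iff_eq_neg] using this
  subst ha
  linear_combination hz - hx

theorem exists_affine_swap (h : x + y = 2 * z) :
    ∃ a b : K, a ≠ 0 ∧ a * x + b = y ∧ a * y + b = x ∧ a * z + b = z :=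
  ⟨-1, x + y, by norm_num, by ring, by ring, by linear_combination h⟩

theorem exists_affine_cycle (hxy : x ≠ y) (hyz : y ≠ z)
    (h : x ^ 2 + y ^ 2 + z ^ 2 = x * y + y * z + z * x) :
    ∃ a b : K, a ≠ 0 ∧ a * x + b = y ∧ a * y + b = z ∧ a * z + b = x := by
  have hxy' : x - y ≠ 0 := sub_ne_zero.2 hxy
  refine ⟨(y - z) / (x - y), y - (y - z) / (x - y) * x,
    div_ne_zero (sub_ne_zero.2 hyz) hxy', by ring, ?_, ?_⟩
  · field_simp
    ring
  · field_simp
    linear_combination (-1) * h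

end AffineSymmetry

section JInvariant

variable {z₁ z₂ z₃ : ℂ}

theorem jInv3_eq_div (h12 : z₁ ≠ z₂) (h13 : z₁ ≠ z₃) (h23 : z₂ ≠ z₃) :
    jInv3 z₁ z₂ z₃ = 4 * (z₁ ^ 2 + z₂ ^ 2 + z₃ ^ 2 - (z₁ * z₂ + z₂ * z₃ + z₃ * z₁)) ^ 3 /
      (27 * ((z₁ - z₂) * (z₂ - z₃) * (z₃ - z₁)) ^ 2) := by
  have : z₁ - z₃ - (z₂ - z₃) ≠ 0 := by rwa [sub_sub_sub_cancel_right, sub_ne_zero]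
  simp only [jInv3]
  field_simp
  ring

theorem jInv3_eq_zero_iff (h12 : z₁ ≠ z₂) (h13 : z₁ ≠ z₃) (h23 : z₂ ≠ z₃) :
    jInv3 z₁ z₂ z₃ = 0 ↔ z₁ ^ 2 + z₂ ^ 2 + z₃ ^ 2 = z₁ * z₂ + z₂ * z₃ + z₃ * z₁ := by
  have hΔ : (z₁ - z₂) * (z₂ - z₃) * (z₃ - z₁) ≠ 0 := by
    simp [sub_eq_zero, h12, h23, h13.symm]
  simp [jInv3_eq_div h12 h13 h23, hΔ, sub_eq_zero]

theorem jInv3_eq_one_iff (h12 : z₁ ≠ z₂) (h13 : z₁ ≠ z₃) (h23 : z₂ ≠ z₃) :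
    jInv3 z₁ z₂ z₃ = 1 ↔ z₂ + z₃ = 2 * z₁ ∨ z₁ + z₃ = 2 * z₂ ∨ z₁ + z₂ = 2 * z₃ := by
  have hΔ : (z₁ - z₂) * (z₂ - z₃) * (z₃ - z₁) ≠ 0 := by
    simp [sub_eq_zero, h12, h23, h13.symm]
  have hdisc : 4 * (z₁ ^ 2 + z₂ ^ 2 + z₃ ^ 2 - (z₁ * z₂ + z₂ * z₃ + z₃ * z₁)) ^ 3 -
      27 * ((z₁ - z₂) * (z₂ - z₃) * (z₃ - z₁)) ^ 2 =
      ((z₂ + z₃ - 2 * z₁) * (z₁ + z₃ - 2 * z₂) * (z₁ + z₂ - 2 * z₃)) ^ 2 := by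
    ring
  rw [jInv3_eq_div h12 h13 h23, div_eq_one_iff_eq (by simpa using hΔ), ← sub_eq_zero, hdisc,
    sq_eq_zero_iff, mul_eq_zero, mul_eq_zero, sub_eq_zero, sub_eq_zero, sub_eq_zero, or_assoc]

end JInvariant

/-- Three pairwise distinct points admit a nontrivial symmetry by an invertible
affine map `z ↦ a z + b` (mapping the set `{z₁, z₂, z₃}` onto itself and inducing
a nontrivial permutation of it) if and only if their j-invariant is `0` or `1`. -/
theorem jInv3_symmetry_iff (z₁ z₂ z₃ : ℂ)
    (h12 : z₁ ≠ z₂) (h13 : z₁ ≠ z₃) (h23 : z₂ ≠ z₃) :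
    (∃ a b : ℂ, a ≠ 0 ∧
        (fun z => a * z + b) '' {z₁, z₂, z₃} = {z₁, z₂, z₃} ∧
        ¬(a * z₁ + b = z₁ ∧ a * z₂ + b = z₂ ∧ a * z₃ + b = z₃)) ↔
      jInv3 z₁ z₂ z₃ = 0 ∨ jInv3 z₁ z₂ z₃ = 1 := by
  have hsymm := fun {a b : ℂ} (ha : a ≠ 0) =>
    image_triple_eq_self_iff (affine_injective (b := b) ha) h12 h13 h23
  rw [jInv3_eq_zero_iff h12 h13 h23, jInv3_eq_one_iff h12 h13 h23]
  constructor
  · rintro ⟨a, b, ha, himg, hne⟩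
    rcases (hsymm ha).1 himg with
      hid | ⟨h1, h2, h3⟩ | ⟨h1, h2, h3⟩ | ⟨h1, h2, h3⟩ | ⟨h1, h2, h3⟩ | ⟨h1, h2, h3⟩
    · exact absurd hid hne
    · exact Or.inr (Or.inl (add_eq_two_mul_of_affine_swap h2 h3 h1 h23))
    · exact Or.inr (Or.inr (Or.inl (add_eq_two_mul_of_affine_swap h1 h3 h2 h13)))
    · exact Or.inr (Or.inr (Or.inr (add_eq_two_mul_of_affine_swap h1 h2 h3 h12)))
    · exact Or.inl (sq_add_sq_add_sq_eq_of_affine_cycle h1 h2 h3)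
    · exact Or.inl (by linear_combination sq_add_sq_add_sq_eq_of_affine_cycle h1 h3 h2)
  · rintro (hQ | hmid | hmid | hmid)
    · obtain ⟨a, b, ha, h1, h2, h3⟩ := exists_affine_cycle h12 h23 hQ
      exact ⟨a, b, ha, (hsymm ha).2 (by tauto), by grind⟩
    · obtain ⟨a, b, ha, h2, h3, h1⟩ := exists_affine_swap hmid
      exact ⟨a, b, ha, (hsymm ha).2 (by tauto), by grind⟩
    · obtain ⟨a, b, ha, h1, h3, h2⟩ := exists_affine_swap hmid
      exact ⟨a, b, ha, (hsymm ha).2 (by tauto), by grind⟩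
    · obtain ⟨a, b, ha, h1, h2, h3⟩ := exists_affine_swap hmid
      exact ⟨a, b, ha, (hsymm ha).2 (by tauto), by grind⟩
end

section
/- Let z₁, z₂, z₃ be pairwise distinct complex numbers. Then j(z₁, z₂, z₃) is real and j(z₁, z₂, z₃) ≥ 1 if and only if the points z₁, z₂, z₃ are collinear, i.e., (z₃ − z₁)/(z₂ − z₁) ∈ ℝ. -/
/-!
With `λ = (z₁ - z₃)/(z₂ - z₃)` we have `(z₃ - z₁)/(z₂ - z₁) = λ/(λ - 1)`, and `μ ↦ μ/(μ - 1)` is an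
involution, so collinearity means `λ ∈ ℝ`. The identity
`4(λ² - λ + 1)³ - 27λ²(λ - 1)² = ((λ + 1)(λ - 2)(2λ - 1))²` gives `j - 1 = (p(λ)/(√27 λ(λ - 1)))²`
with `p(λ) = (λ + 1)(λ - 2)(2λ - 1)`, so `j ≥ 1` for real `λ`. Conversely, if `j` is real and
`≥ 1` then `p(λ) = t λ(λ - 1)` for some real `t`, and every root of this real cubic is real.
-/

noncomputable def jOfLambda {K : Type*} [Field K] (l : K) : K :=
  4 * (l ^ 2 - l + 1) ^ 3 / (27 * l ^ 2 * (l - 1) ^ 2)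

lemma jInv3_eq_jOfLambda (z₁ z₂ z₃ : ℂ) :
    jInv3 z₁ z₂ z₃ = jOfLambda ((z₁ - z₃) / (z₂ - z₃)) := rfl

lemma four_mul_cube_sub_eq_sq {R : Type*} [CommRing R] (l : R) :
    4 * (l ^ 2 - l + 1) ^ 3 - 27 * (l * (l - 1)) ^ 2 = ((l + 1) * (l - 2) * (2 * l - 1)) ^ 2 := by
  ring

lemma one_le_jOfLambda {s : ℝ} (h0 : s ≠ 0) (h1 : s ≠ 1) : 1 ≤ jOfLambda s := by
  have hpos : 0 < 27 * s ^ 2 * (s - 1) ^ 2 := by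
    have := sub_ne_zero.2 h1
    positivity
  rw [jOfLambda, one_le_div₀ hpos]
  nlinarith [four_mul_cube_sub_eq_sq s, sq_nonneg ((s + 1) * (s - 2) * (2 * s - 1))]

lemma exists_cubic_eq_ofReal_mul_of_jOfLambda_eq {l : ℂ} {r : ℝ}
    (hj : jOfLambda l = r) (hr : 1 ≤ r) :
    ∃ t : ℝ, (l + 1) * (l - 2) * (2 * l - 1) = t * (l * (l - 1)) := by
  have hden : 27 * l ^ 2 * (l - 1) ^ 2 ≠ 0 := by
    intro h
    rw [jOfLambda, h, div_zero] at hj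
    have : r = 0 := by exact_mod_cast hj.symm
    linarith
  rw [jOfLambda, div_eq_iff hden] at hj
  set c := Real.sqrt (27 * (r - 1))
  have hc : (c : ℂ) ^ 2 = 27 * (r - 1) := by
    rw [← Complex.ofReal_pow, Real.sq_sqrt (by linarith)]
    push_cast
    ring
  have hsq : ((l + 1) * (l - 2) * (2 * l - 1)) ^ 2 = (c * (l * (l - 1))) ^ 2 := by
    linear_combination (four_mul_cube_sub_eq_sq l).symm + hj - (l * (l - 1)) ^ 2 * hc
  rcases sq_eq_sq_iff_eq_or_eq_neg.1 hsq with h | h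
  · exact ⟨c, h⟩
  · exact ⟨-c, by push_cast; linear_combination h⟩

lemma im_eq_zero_of_cubic_eq_ofReal_mul {l : ℂ} {t : ℝ}
    (h : (l + 1) * (l - 2) * (2 * l - 1) = t * (l * (l - 1))) : l.im = 0 := by
  obtain ⟨x, y⟩ := l
  have hre := congrArg Complex.re h
  have him := congrArg Complex.im h
  simp only [Complex.mul_re, Complex.mul_im, Complex.add_re, Complex.add_im, Complex.sub_re,
    Complex.sub_im, Complex.ofReal_re, Complex.ofReal_im, Complex.one_re, Complex.one_im,
    Complex.re_ofNat, Complex.im_ofNat] at hre him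
  show y = 0
  by_contra hy
  have hquad : 6 * x ^ 2 - 2 * y ^ 2 - (6 + 2 * t) * x + t - 3 = 0 := by
    refine (mul_eq_zero.1 ?_).resolve_left hy
    linear_combination him
  -- Eliminating `t` between the real part and the imaginary part divided by `y` leaves a sum of
  -- squares.
  have hsum : (x ^ 2 - x + 1 + y ^ 2) ^ 2 + y ^ 2 = 0 := by
    linear_combination (1 / 2 - x) * hre + (x ^ 2 - y ^ 2 - x) / 2 * hquad
  have : 0 < y ^ 2 := by positivity
  nlinarith [sq_nonneg (x ^ 2 - x + 1 + y ^ 2)]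

lemma jOfLambda_real_ge_one_iff {l : ℂ} (h0 : l ≠ 0) (h1 : l ≠ 1) :
    (∃ r : ℝ, jOfLambda l = r ∧ 1 ≤ r) ↔ ∃ s : ℝ, l = s := by
  constructor
  · rintro ⟨r, hj, hr⟩
    obtain ⟨t, ht⟩ := exists_cubic_eq_ofReal_mul_of_jOfLambda_eq hj hr
    have him := im_eq_zero_of_cubic_eq_ofReal_mul ht
    exact ⟨l.re, Complex.ext (by simp) (by simp [him])⟩
  · rintro ⟨s, rfl⟩
    exact ⟨jOfLambda s, by simp [jOfLambda],
      one_le_jOfLambda (by exact_mod_cast h0) (by exact_mod_cast h1)⟩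

lemma div_sub_one_div_div_sub_one {K : Type*} [Field K] {l : K} (h1 : l ≠ 1) :
    l / (l - 1) / (l / (l - 1) - 1) = l := by
  have := sub_ne_zero.2 h1
  field_simp
  ring

lemma exists_ofReal_eq_div_sub_one_iff {l : ℂ} (h1 : l ≠ 1) :
    (∃ t : ℝ, l / (l - 1) = t) ↔ ∃ s : ℝ, l = s := by
  constructor
  · rintro ⟨t, ht⟩
    refine ⟨t / (t - 1), ?_⟩
    rw [← div_sub_one_div_div_sub_one h1, ht]
    push_cast
    rfl
  · rintro ⟨s, rfl⟩
    exact ⟨s / (s - 1), by push_cast; rfl⟩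

lemma sub_div_sub_eq_div_div_sub_one {K : Type*} [Field K] {a b c : K} (hbc : b ≠ c) :
    (c - a) / (b - a) = (a - c) / (b - c) / ((a - c) / (b - c) - 1) := by
  have hbc' := sub_ne_zero.2 hbc
  have hl1 : (a - c) / (b - c) - 1 = (a - b) / (b - c) := by
    field_simp
    ring
  rw [hl1, div_div_div_cancel_right₀ hbc', ← neg_sub a c, ← neg_sub a b, neg_div_neg_eq]

/-- For pairwise distinct points `z₁, z₂, z₃`: the j-invariant is real and `≥ 1`
if and only if the three points are collinear. -/
theorem jInv3_real_ge_one_iff_collinear (z₁ z₂ z₃ : ℂ)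
    (h12 : z₁ ≠ z₂) (h13 : z₁ ≠ z₃) (h23 : z₂ ≠ z₃) :
    (∃ r : ℝ, jInv3 z₁ z₂ z₃ = (r : ℂ) ∧ 1 ≤ r) ↔
      ∃ t : ℝ, (z₃ - z₁) / (z₂ - z₁) = (t : ℂ) := by
  have hl0 : (z₁ - z₃) / (z₂ - z₃) ≠ 0 := div_ne_zero (sub_ne_zero.2 h13) (sub_ne_zero.2 h23)
  have hl1 : (z₁ - z₃) / (z₂ - z₃) ≠ 1 := by
    rw [Ne, div_eq_one_iff_eq (sub_ne_zero.2 h23), sub_left_inj]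
    exact h12
  rw [jInv3_eq_jOfLambda, jOfLambda_real_ge_one_iff hl0 hl1, sub_div_sub_eq_div_div_sub_one h23,
    exists_ofReal_eq_div_sub_one_iff hl1]
end

section
/- Let z₁, z₂, z₃ be pairwise distinct complex numbers. Then j(z₁, z₂, z₃) is real and j(z₁, z₂, z₃) < 1 if and only if the points z₁, z₂, z₃ are not collinear and form an isosceles triangle, i.e., (z₃ − z₁)/(z₂ − z₁) ∉ ℝ and at least two of the three side lengths |z₁ − z₂|, |z₂ − z₃|, |z₃ − z₁| are equal. -/
open Complex

noncomputable def jLambda (l : ℂ) : ℂ :=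
  4 * (l ^ 2 - l + 1) ^ 3 / (27 * l ^ 2 * (l - 1) ^ 2)

noncomputable def jLambdaRoot (l : ℂ) : ℂ :=
  (l + 1) * (2 * l - 1) * (l - 2) / (l * (l - 1))

theorem jLambda_eq_one_add_jLambdaRoot_sq {l : ℂ} (hl0 : l ≠ 0) (hl1 : l ≠ 1) :
    jLambda l = 1 + jLambdaRoot l ^ 2 / 27 := by
  have hl1' : l - 1 ≠ 0 := sub_ne_zero.2 hl1
  rw [jLambda, jLambdaRoot]
  field_simp
  ring

theorem Complex.exists_sq_eq_ofReal_neg_iff (u : ℂ) :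
    (∃ r : ℝ, u ^ 2 = r ∧ r < 0) ↔ u.re = 0 ∧ u ≠ 0 := by
  constructor
  · rintro ⟨r, hr, hr0⟩
    have hre : u.re ^ 2 - u.im ^ 2 = r := by simpa [sq] using congrArg re hr
    have him : 2 * u.re * u.im = 0 := by
      have := congrArg im hr
      simp only [sq, mul_im, ofReal_im] at this
      linarith
    have hu_im : u.im ≠ 0 := fun h => by nlinarith [sq_nonneg u.re]
    refine ⟨by simpa [hu_im] using him, fun hu => hu_im (by simp [hu])⟩
  · rintro ⟨hre, hu⟩
    have hu_im : u.im ≠ 0 := fun h => hu (Complex.ext hre h)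
    refine ⟨-u.im ^ 2, ?_, neg_lt_zero.2 (by positivity)⟩
    apply Complex.ext <;> simp [sq, hre]

theorem exists_jLambda_eq_ofReal_lt_one_iff {l : ℂ} (hl0 : l ≠ 0) (hl1 : l ≠ 1) :
    (∃ r : ℝ, jLambda l = r ∧ r < 1) ↔ (jLambdaRoot l).re = 0 ∧ jLambdaRoot l ≠ 0 := by
  rw [jLambda_eq_one_add_jLambdaRoot_sq hl0 hl1, ← exists_sq_eq_ofReal_neg_iff]
  constructor
  · rintro ⟨r, hr, hr1⟩
    exact ⟨27 * (r - 1), by push_cast; linear_combination 27 * hr, by linarith⟩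
  · rintro ⟨s, hs, hs0⟩
    exact ⟨1 + s / 27, by rw [hs]; push_cast; ring, by linarith⟩

theorem jLambdaRoot_re_mul_normSq (l : ℂ) :
    (jLambdaRoot l).re * normSq (l * (l - 1)) =
      (‖l - 1‖ ^ 2 - 1) * (‖l‖ ^ 2 - 1) * (‖l‖ ^ 2 - ‖l - 1‖ ^ 2) := by
  rcases eq_or_ne (normSq (l * (l - 1))) 0 with hN | hN
  · rw [hN, mul_zero]
    rcases mul_eq_zero.1 (normSq_eq_zero.1 hN) with h | h
    · simp [h]
    · simp [sub_eq_zero.1 h]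
  rw [jLambdaRoot, div_re, ← add_div, div_mul_cancel₀ _ hN]
  simp only [Complex.sq_norm, normSq_apply]
  simp only [mul_re, mul_im, add_re, add_im, sub_re, sub_im, one_re, one_im, re_ofNat, im_ofNat]
  ring

theorem jLambdaRoot_re_eq_zero_iff {l : ℂ} (hl0 : l ≠ 0) (hl1 : l ≠ 1) :
    (jLambdaRoot l).re = 0 ↔ ‖l - 1‖ = 1 ∨ ‖l‖ = 1 ∨ ‖l‖ = ‖l - 1‖ := by
  have hN : normSq (l * (l - 1)) ≠ 0 := by
    simpa [normSq_eq_zero, sub_eq_zero] using And.intro hl0 hl1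
  have hsq {a b : ℝ} (ha : 0 ≤ a) (hb : 0 ≤ b) : a ^ 2 - b ^ 2 = 0 ↔ a = b := by
    rw [sub_eq_zero, sq_eq_sq₀ ha hb]
  have hsq_one {a : ℝ} (ha : 0 ≤ a) : a ^ 2 - 1 = 0 ↔ a = 1 := by
    simpa using hsq ha zero_le_one
  rw [← mul_eq_zero_iff_right hN, jLambdaRoot_re_mul_normSq, mul_eq_zero, mul_eq_zero,
    hsq_one (norm_nonneg _), hsq_one (norm_nonneg _), hsq (norm_nonneg _) (norm_nonneg _), or_assoc]

theorem jLambdaRoot_ne_zero {l : ℂ} (h : l.im ≠ 0) : jLambdaRoot l ≠ 0 := by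
  have ne_zero_of_im {z : ℂ} (hz : z.im ≠ 0) : z ≠ 0 := fun h0 => hz (by simp [h0])
  unfold jLambdaRoot
  refine div_ne_zero (mul_ne_zero (mul_ne_zero ?_ ?_) ?_) (mul_ne_zero ?_ ?_) <;>
    exact ne_zero_of_im (by simpa using h)

theorem jLambdaRoot_im_eq_zero {l : ℂ} (h : l.im = 0) : (jLambdaRoot l).im = 0 := by
  rw [← conj_eq_iff_im] at h ⊢
  simp [jLambdaRoot, map_div₀, map_ofNat, h]

theorem jLambdaRoot_re_eq_zero_and_ne_zero_iff {l : ℂ} (hl0 : l ≠ 0) (hl1 : l ≠ 1) :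
    (jLambdaRoot l).re = 0 ∧ jLambdaRoot l ≠ 0 ↔
      l.im ≠ 0 ∧ (‖l - 1‖ = 1 ∨ ‖l‖ = 1 ∨ ‖l‖ = ‖l - 1‖) := by
  rw [← jLambdaRoot_re_eq_zero_iff hl0 hl1]
  constructor
  · rintro ⟨hre, hne⟩
    exact ⟨fun him => hne (Complex.ext hre (jLambdaRoot_im_eq_zero him)), hre⟩
  · rintro ⟨him, hre⟩
    exact ⟨hre, jLambdaRoot_ne_zero him⟩

theorem Complex.div_sub_one_im (l : ℂ) : (l / (l - 1)).im = -l.im / normSq (l - 1) := by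
  rw [div_im]
  simp only [sub_re, sub_im, one_re, one_im]
  ring

/-- For pairwise distinct points `z₁, z₂, z₃`: the j-invariant is real and `< 1`
if and only if the points are not collinear and form an isosceles triangle. -/
theorem jInv3_real_lt_one_iff_isosceles (z₁ z₂ z₃ : ℂ)
    (h12 : z₁ ≠ z₂) (h13 : z₁ ≠ z₃) (h23 : z₂ ≠ z₃) :
    (∃ r : ℝ, jInv3 z₁ z₂ z₃ = (r : ℂ) ∧ r < 1) ↔
      ((¬∃ t : ℝ, (z₃ - z₁) / (z₂ - z₁) = (t : ℂ)) ∧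
        (‖z₁ - z₂‖ = ‖z₂ - z₃‖ ∨
          ‖z₂ - z₃‖ = ‖z₃ - z₁‖ ∨
          ‖z₃ - z₁‖ = ‖z₁ - z₂‖)) := by
  set d := z₂ - z₃
  set l := (z₁ - z₃) / d
  have hd : d ≠ 0 := sub_ne_zero.2 h23
  have hl0 : l ≠ 0 := div_ne_zero (sub_ne_zero.2 h13) hd
  have hl1 : l ≠ 1 := fun h => h12 (by
    rw [div_eq_one_iff_eq hd] at h
    linear_combination h)
  have h₁₂ : z₁ - z₂ = (l - 1) * d := by
    rw [sub_one_mul, div_mul_cancel₀ _ hd]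
    ring
  have h₃₁ : z₃ - z₁ = -l * d := by
    rw [neg_mul, div_mul_cancel₀ _ hd]
    ring
  have hcollinear : (¬∃ t : ℝ, (z₃ - z₁) / (z₂ - z₁) = t) ↔ l.im ≠ 0 := by
    have hratio : (z₃ - z₁) / (z₂ - z₁) = l / (l - 1) := by
      rw [h₃₁, show z₂ - z₁ = -((l - 1) * d) by rw [← h₁₂]; ring, neg_mul, neg_div_neg_eq,
        mul_div_mul_right _ _ hd]
    have hnormSq : normSq (l - 1) ≠ 0 := normSq_eq_zero.not.2 (sub_ne_zero.2 hl1)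
    rw [hratio, ← conj_eq_iff_real, conj_eq_iff_im, div_sub_one_im, div_eq_zero_iff,
      or_iff_left hnormSq, neg_eq_zero]
  have hd' : ‖d‖ ≠ 0 := norm_ne_zero_iff.2 hd
  have hsides : (‖z₁ - z₂‖ = ‖d‖ ∨ ‖d‖ = ‖z₃ - z₁‖ ∨ ‖z₃ - z₁‖ = ‖z₁ - z₂‖) ↔
      (‖l - 1‖ = 1 ∨ ‖l‖ = 1 ∨ ‖l‖ = ‖l - 1‖) := by
    rw [h₁₂, h₃₁, norm_mul, norm_mul, norm_neg, mul_eq_right₀ hd', right_eq_mul₀ hd',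
      mul_left_inj' hd']
  rw [show jInv3 z₁ z₂ z₃ = jLambda l from rfl, exists_jLambda_eq_ofReal_lt_one_iff hl0 hl1,
    jLambdaRoot_re_eq_zero_and_ne_zero_iff hl0 hl1, hcollinear, hsides]
end

section
/- Let z₁, z₂, z₃ be pairwise distinct complex numbers. If j(z₁, z₂, z₃) is not real, then the three side lengths |z₁ − z₂|, |z₂ − z₃|, |z₃ − z₁| are pairwise distinct (so the points form a triangle with side lengths pairwise different). -/
/-!
Writing `λ = (z₁ - z₃) / (z₂ - z₃)`, the j-invariant is `J(λ)` for a rational function `J` with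
real coefficients, so `conj (J λ) = J (conj λ)`, and `J` is invariant under `λ ↦ λ⁻¹` and
`λ ↦ 1 - λ`; the latter two make `jInv3` a symmetric function of the three points. If two sides
are equal, relabel the points so that they meet at `z₃`; then `|λ| = 1`, so `conj λ = λ⁻¹` and
`conj (J λ) = J (λ⁻¹) = J λ` is real.
-/

open ComplexConjugate

noncomputable def jFun (l : ℂ) : ℂ :=
  4 * (l ^ 2 - l + 1) ^ 3 / (27 * l ^ 2 * (l - 1) ^ 2)

theorem jInv3_eq_jFun (z₁ z₂ z₃ : ℂ) : jInv3 z₁ z₂ z₃ = jFun ((z₁ - z₃) / (z₂ - z₃)) := rfl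

theorem jFun_conj (l : ℂ) : jFun (conj l) = conj (jFun l) := by
  simp [jFun, map_ofNat]

theorem jFun_inv (l : ℂ) : jFun l⁻¹ = jFun l := by
  rcases eq_or_ne l 0 with rfl | h0
  · simp
  rcases eq_or_ne l 1 with rfl | h1
  · simp
  have h1' : l - 1 ≠ 0 := sub_ne_zero.mpr h1
  unfold jFun
  field_simp
  ring

theorem jFun_one_sub (l : ℂ) : jFun (1 - l) = jFun l := by
  unfold jFun
  ring

theorem jFun_im_eq_zero_of_norm_eq_one {l : ℂ} (hl : ‖l‖ = 1) : (jFun l).im = 0 := by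
  rw [← Complex.conj_eq_iff_im, ← jFun_conj, ← Complex.inv_eq_conj hl, jFun_inv]

theorem jInv3_swap_left (z₁ z₂ z₃ : ℂ) : jInv3 z₂ z₁ z₃ = jInv3 z₁ z₂ z₃ := by
  rw [jInv3_eq_jFun, jInv3_eq_jFun, ← inv_div, jFun_inv]

theorem jInv3_swap_right (z₁ z₂ z₃ : ℂ) : jInv3 z₁ z₃ z₂ = jInv3 z₁ z₂ z₃ := by
  rw [jInv3_eq_jFun, jInv3_eq_jFun]
  rcases eq_or_ne z₂ z₃ with rfl | h
  · simp
  rw [← jFun_one_sub ((z₁ - z₃) / (z₂ - z₃))]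
  congr 1
  field_simp
  ring

theorem jInv3_im_eq_zero_of_norm_sub_eq {z₁ z₂ z₃ : ℂ} (h : ‖z₁ - z₃‖ = ‖z₂ - z₃‖) :
    (jInv3 z₁ z₂ z₃).im = 0 := by
  rcases eq_or_ne z₂ z₃ with rfl | h23
  · simp [jInv3_eq_jFun, jFun]
  apply jFun_im_eq_zero_of_norm_eq_one
  rw [norm_div, h, div_self (norm_ne_zero_iff.mpr (sub_ne_zero.mpr h23))]

theorem sides_distinct_of_jInv3_not_real_general (z₁ z₂ z₃ : ℂ)
    (hj : (jInv3 z₁ z₂ z₃).im ≠ 0) :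
    ‖z₁ - z₂‖ ≠ ‖z₂ - z₃‖ ∧
    ‖z₂ - z₃‖ ≠ ‖z₃ - z₁‖ ∧
    ‖z₃ - z₁‖ ≠ ‖z₁ - z₂‖ := by
  refine ⟨fun h ↦ hj ?_, fun h ↦ hj ?_, fun h ↦ hj ?_⟩
  · rw [← jInv3_swap_right]
    exact jInv3_im_eq_zero_of_norm_sub_eq (by rwa [norm_sub_rev z₃])
  · exact jInv3_im_eq_zero_of_norm_sub_eq (by rw [norm_sub_rev, h])
  · rw [← jInv3_swap_left, ← jInv3_swap_right]
    exact jInv3_im_eq_zero_of_norm_sub_eq (by rw [norm_sub_rev, h, norm_sub_rev])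

/-- If the j-invariant of three pairwise distinct points is not real, then the
three side lengths of the triangle they form are pairwise distinct. -/
theorem sides_distinct_of_jInv3_not_real (z₁ z₂ z₃ : ℂ)
    (h12 : z₁ ≠ z₂) (h13 : z₁ ≠ z₃) (h23 : z₂ ≠ z₃)
    (hj : (jInv3 z₁ z₂ z₃).im ≠ 0) :
    ‖z₁ - z₂‖ ≠ ‖z₂ - z₃‖ ∧
    ‖z₂ - z₃‖ ≠ ‖z₃ - z₁‖ ∧
    ‖z₃ - z₁‖ ≠ ‖z₁ - z₂‖ :=
  sides_distinct_of_jInv3_not_real_general z₁ z₂ z₃ hj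
end
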